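/- Fix a face f of ℤ² and an integer N ≥ 0. Let η₀ and η′₀ be dimer coverings of ℤ², and for k ≥ 1 let η_k = T_k(η_{k−1}) and η′_k = T_k(η′_{k−1}), where T_k is the shuffling map acting at time k−1, with the same choice function used for both evolutions at each step. If the height functions satisfy h_{η₀}(g) = h_{η′₀}(g) for every face g whose label is at ℓ¹-distance at most N+1 from the label of f, then h_{η_k}(f) = h_{η′_k}(f) for every 0 ≤ k ≤ N. -/

import Mathlib

/-- Vertices of the square lattice `ℤ²`. -/
abbrev Vtx := ℤ × ℤ

/-- An edge of `ℤ²`, encoded as its base vertex together with a direction: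
`true` for the horizontal edge to `(+1,0)`, `false` for the vertical edge to `(0,+1)`. -/
abbrev DEdge := Vtx × Bool

/-- The displacement of an edge of given direction. -/
def edir (b : Bool) : Vtx := if b then (1, 0) else (0, 1)

/-- A dimer covering (perfect matching) of `ℤ²`: every vertex belongs to exactly one edge. -/
def IsDimerCover (η : Set DEdge) : Prop :=
  ∀ v : Vtx, ∃! e : DEdge, e ∈ η ∧ (v = e.1 ∨ v = e.1 + edir e.2)

/-- The indicator `1_{e ∈ η}` as a real number. -/
noncomputable def dInd (η : Set DEdge) (e : DEdge) : ℝ :=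
  Set.indicator η (fun _ => (1 : ℝ)) e

/-- `+1` if `m + k` is even, `-1` otherwise: at time `k` a vertex `(x₁,x₂)` is white iff
`x₁ + x₂ + k` is even (the colors of the vertices are interchanged at each time step). -/
def sgnW (k m : ℤ) : ℝ := if (m + k) % 2 = 0 then 1 else -1

/-- Adjacency of faces: the face `g` is one of the four nearest neighbors of `f`. -/
def Adj (f g : ℤ × ℤ) : Prop :=
  g = (f.1 + 1, f.2) ∨ g = (f.1 - 1, f.2) ∨ g = (f.1, f.2 + 1) ∨ g = (f.1, f.2 - 1)

/-- The height increment `σ_e (1_{e∈η} − 1/4)` when stepping from face `f` to an adjacent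
face `g` across their shared edge `e`, with the coloring at time `k`: `σ_e = +1` iff the
endpoint of `e` which is white at time `k` lies to the right of the direction of crossing. -/
noncomputable def inc (k : ℤ) (η : Set DEdge) (f g : ℤ × ℤ) : ℝ :=
  if g = (f.1 + 1, f.2) then
    sgnW k (f.1 + 1 + f.2) * (dInd η ((f.1 + 1, f.2), false) - 1 / 4)
  else if g = (f.1 - 1, f.2) then
    sgnW k (f.1 + f.2 + 1) * (dInd η ((f.1, f.2), false) - 1 / 4)
  else if g = (f.1, f.2 + 1) then
    sgnW k (f.1 + f.2) * (dInd η ((f.1, f.2 + 1), true) - 1 / 4)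
  else if g = (f.1, f.2 - 1) then
    sgnW k (f.1 + f.2) * (dInd η ((f.1, f.2), true) - 1 / 4)
  else 0

/-- `h` is a height function for the dimer covering `η` at time `k`. -/
def IsHeightAt (k : ℤ) (η : Set DEdge) (h : ℤ × ℤ → ℝ) : Prop :=
  ∀ f g : ℤ × ℤ, Adj f g → h g - h f = inc k η f g

/-- Bottom edge of the face `f = (i,j)`. -/
def bE (f : ℤ × ℤ) : DEdge := ((f.1, f.2), true)
/-- Top edge of the face `f`. -/
def tE (f : ℤ × ℤ) : DEdge := ((f.1, f.2 + 1), true)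
/-- Left edge of the face `f`. -/
def lE (f : ℤ × ℤ) : DEdge := ((f.1, f.2), false)
/-- Right edge of the face `f`. -/
def rE (f : ℤ × ℤ) : DEdge := ((f.1 + 1, f.2), false)

/-- The four boundary edges of the face `f`. -/
def bdF (f : ℤ × ℤ) : Set DEdge := {bE f, tE f, lE f, rE f}

/-- The edge opposite to `e` on the boundary of the face `f`. -/
def oppE (f : ℤ × ℤ) (e : DEdge) : DEdge :=
  if e = bE f then tE f else if e = tE f then bE f else if e = lE f then rE f else lE f

/-- The face `f = (i,j)` is even at time `k` iff `i + j ≡ k (mod 2)`. -/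
def IsEvenFace (k : ℤ) (f : ℤ × ℤ) : Prop := (f.1 + f.2) % 2 = k % 2

/-- The shuffling map acting at time `k` with choice function `c` (deletion, sliding and
creation steps). -/
def shuffle (k : ℤ) (c : ℤ × ℤ → Bool) (η : Set DEdge) : Set DEdge :=
  { e | ∃ f : ℤ × ℤ, IsEvenFace k f ∧ e ∈ bdF f ∧
      ((η ∩ bdF f = ∅ ∧
          (if c f then e = tE f ∨ e = bE f else e = lE f ∨ e = rE f)) ∨
        (∃ e₀ : DEdge, η ∩ bdF f = {e₀} ∧ e = oppE f e₀)) }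

/-!
The shuffling dynamics is local.  If two height functions agree
on a face `p` and its four neighbours, the height increments across the four sides of `p` agree,
so the two coverings agree on the boundary of `p`.  When `p` is even, its boundary is exactly what
the shuffle reads to decide the new dimers on that boundary, so the new coverings agree there too;
crossing from an odd neighbour (whose height is frozen) then gives equal new heights at `p`.
At odd faces the heights do not move.  Hence agreement on the `ℓ¹`-ball of radius `r + 1` at
time `k` gives agreement on the ball of radius `r` at time `k + 1`.
-/

def l1Dist (f g : ℤ × ℤ) : ℤ := |g.1 - f.1| + |g.2 - f.2|

lemma l1Dist_self (f : ℤ × ℤ) : l1Dist f f = 0 := by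
  simp [l1Dist]

lemma l1Dist_triangle (f g q : ℤ × ℤ) : l1Dist f q ≤ l1Dist f g + l1Dist g q := by
  have h₁ : |q.1 - f.1| ≤ |g.1 - f.1| + |q.1 - g.1| := by
    simpa [add_comm] using abs_sub_le q.1 g.1 f.1
  have h₂ : |q.2 - f.2| ≤ |g.2 - f.2| + |q.2 - g.2| := by
    simpa [add_comm] using abs_sub_le q.2 g.2 f.2
  unfold l1Dist
  linarith

lemma sgnW_ne_zero (k m : ℤ) : sgnW k m ≠ 0 := by
  unfold sgnW; split <;> norm_num

lemma dInd_congr {η η' : Set DEdge} {e : DEdge} (h : e ∈ η ↔ e ∈ η') :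
    dInd η e = dInd η' e := by
  by_cases he : e ∈ η
  · simp [dInd, he, h.mp he]
  · simp [dInd, he, mt h.mpr he]

lemma mem_iff_of_inc_eq {k s : ℤ} {η η' : Set DEdge} {e : DEdge}
    (h : sgnW k s * (dInd η e - 1 / 4) = sgnW k s * (dInd η' e - 1 / 4)) :
    e ∈ η ↔ e ∈ η' := by
  have hd := sub_left_inj.mp (mul_left_cancel₀ (sgnW_ne_zero k s) h)
  by_cases he : e ∈ η <;> by_cases he' : e ∈ η' <;> simp_all [dInd]

lemma inc_right (k : ℤ) (η : Set DEdge) (p : ℤ × ℤ) :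
    inc k η p (p.1 + 1, p.2) = sgnW k (p.1 + 1 + p.2) * (dInd η (rE p) - 1 / 4) := by
  simp [inc, rE]

lemma inc_left (k : ℤ) (η : Set DEdge) (p : ℤ × ℤ) :
    inc k η p (p.1 - 1, p.2) = sgnW k (p.1 + p.2 + 1) * (dInd η (lE p) - 1 / 4) := by
  have h₁ : p.1 - 1 ≠ p.1 + 1 := by omega
  simp [inc, lE, h₁]

lemma inc_up (k : ℤ) (η : Set DEdge) (p : ℤ × ℤ) :
    inc k η p (p.1, p.2 + 1) = sgnW k (p.1 + p.2) * (dInd η (tE p) - 1 / 4) := by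
  simp [inc, tE]

lemma inc_down (k : ℤ) (η : Set DEdge) (p : ℤ × ℤ) :
    inc k η p (p.1, p.2 - 1) = sgnW k (p.1 + p.2) * (dInd η (bE p) - 1 / 4) := by
  have h₁ : p.2 - 1 ≠ p.2 + 1 := by omega
  simp [inc, bE, h₁]

lemma inter_bdF_eq_of_heightAt {k : ℤ} {η η' : Set DEdge} {h h' : ℤ × ℤ → ℝ}
    (hh : IsHeightAt k η h) (hh' : IsHeightAt k η' h') {p : ℤ × ℤ}
    (hnear : ∀ q, l1Dist p q ≤ 1 → h q = h' q) :
    η ∩ bdF p = η' ∩ bdF p := by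
  have hinc : ∀ q, Adj p q → l1Dist p q ≤ 1 → inc k η p q = inc k η' p q := fun q hq hd => by
    rw [← hh p q hq, ← hh' p q hq, hnear p (by simp [l1Dist_self]), hnear q hd]
  have hR := hinc (p.1 + 1, p.2) (by simp [Adj]) (by simp [l1Dist])
  have hL := hinc (p.1 - 1, p.2) (by simp [Adj]) (by simp [l1Dist])
  have hT := hinc (p.1, p.2 + 1) (by simp [Adj]) (by simp [l1Dist])
  have hB := hinc (p.1, p.2 - 1) (by simp [Adj]) (by simp [l1Dist])
  rw [inc_right, inc_right] at hR
  rw [inc_left, inc_left] at hL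
  rw [inc_up, inc_up] at hT
  rw [inc_down, inc_down] at hB
  have hbd : ∀ e ∈ bdF p, (e ∈ η ↔ e ∈ η') := by
    rintro e (rfl | rfl | rfl | rfl)
    exacts [mem_iff_of_inc_eq hB, mem_iff_of_inc_eq hT, mem_iff_of_inc_eq hL,
      mem_iff_of_inc_eq hR]
  ext e
  simp only [Set.mem_inter_iff]
  exact ⟨fun ⟨he, hp⟩ => ⟨(hbd e hp).mp he, hp⟩, fun ⟨he, hp⟩ => ⟨(hbd e hp).mpr he, hp⟩⟩

lemma eq_of_mem_bdF_of_isEvenFace {k : ℤ} {e : DEdge} {p q : ℤ × ℤ}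
    (hp : e ∈ bdF p) (hq : e ∈ bdF q) (hpe : IsEvenFace k p) (hqe : IsEvenFace k q) :
    p = q := by
  simp only [bdF, Set.mem_insert_iff, Set.mem_singleton_iff, bE, tE, lE, rE] at hp hq
  unfold IsEvenFace at hpe hqe
  obtain ⟨i, j⟩ := p; obtain ⟨a, b⟩ := q; obtain ⟨⟨x, y⟩, d⟩ := e
  simp only [Prod.mk.injEq] at hp hq hpe hqe ⊢
  rcases hp with ⟨⟨h1, h2⟩, h3⟩ | ⟨⟨h1, h2⟩, h3⟩ | ⟨⟨h1, h2⟩, h3⟩ | ⟨⟨h1, h2⟩, h3⟩ <;>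
    rcases hq with ⟨⟨g1, g2⟩, g3⟩ | ⟨⟨g1, g2⟩, g3⟩ | ⟨⟨g1, g2⟩, g3⟩ | ⟨⟨g1, g2⟩, g3⟩ <;>
    simp_all <;> omega

lemma mem_shuffle_iff_of_inter_bdF_eq {k : ℤ} {c : ℤ × ℤ → Bool} {η η' : Set DEdge}
    {p : ℤ × ℤ} {e : DEdge} (hp : IsEvenFace k p) (he : e ∈ bdF p)
    (hint : η ∩ bdF p = η' ∩ bdF p) :
    e ∈ shuffle k c η ↔ e ∈ shuffle k c η' := by
  suffices ∀ η₁ η₂ : Set DEdge, η₁ ∩ bdF p = η₂ ∩ bdF p →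
      e ∈ shuffle k c η₁ → e ∈ shuffle k c η₂ from ⟨this η η' hint, this η' η hint.symm⟩
  rintro η₁ η₂ hi ⟨q, hqe, heq, hcond⟩
  obtain rfl : q = p := eq_of_mem_bdF_of_isEvenFace heq he hqe hp
  exact ⟨q, hqe, heq, hi ▸ hcond⟩

lemma not_isEvenFace_right {k : ℤ} {p : ℤ × ℤ} (hp : IsEvenFace k p) :
    ¬ IsEvenFace k (p.1 + 1, p.2) := by
  unfold IsEvenFace at *
  omega

lemma heightAt_shuffle_eq {k k₁ : ℤ} {c : ℤ × ℤ → Bool} {η η' : Set DEdge}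
    {h₀ h₀' h₁ h₁' : ℤ × ℤ → ℝ}
    (hh₀ : IsHeightAt k η h₀) (hh₀' : IsHeightAt k η' h₀')
    (hh₁ : IsHeightAt k₁ (shuffle k c η) h₁) (hh₁' : IsHeightAt k₁ (shuffle k c η') h₁')
    (hnorm : ∀ g, ¬ IsEvenFace k g → h₁ g = h₀ g)
    (hnorm' : ∀ g, ¬ IsEvenFace k g → h₁' g = h₀' g)
    {p : ℤ × ℤ} (hnear : ∀ q, l1Dist p q ≤ 1 → h₀ q = h₀' q) :
    h₁ p = h₁' p := by
  by_cases hp : IsEvenFace k p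
  case neg =>
    rw [hnorm p hp, hnorm' p hp, hnear p (by simp [l1Dist_self])]
  case pos =>
    have hodd := not_isEvenFace_right hp
    have hq : h₁ (p.1 + 1, p.2) = h₁' (p.1 + 1, p.2) := by
      rw [hnorm _ hodd, hnorm' _ hodd, hnear _ (by simp [l1Dist])]
    have hrE : rE p ∈ shuffle k c η ↔ rE p ∈ shuffle k c η' :=
      mem_shuffle_iff_of_inter_bdF_eq hp (by simp [bdF])
        (inter_bdF_eq_of_heightAt hh₀ hh₀' hnear)
    have hstep := hh₁ p (p.1 + 1, p.2) (by simp [Adj])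
    have hstep' := hh₁' p (p.1 + 1, p.2) (by simp [Adj])
    rw [inc_right, dInd_congr hrE] at hstep
    rw [inc_right] at hstep'
    linarith

theorem stmt_15_general (f : ℤ × ℤ) (N : ℕ) (c : ℕ → ℤ × ℤ → Bool)
    (η η' : ℕ → Set DEdge)
    (hev : ∀ k : ℕ, η (k + 1) = shuffle (k : ℤ) (c k) (η k))
    (hev' : ∀ k : ℕ, η' (k + 1) = shuffle (k : ℤ) (c k) (η' k))
    (h h' : ℕ → ℤ × ℤ → ℝ)
    (hh : ∀ k : ℕ, IsHeightAt (k : ℤ) (η k) (h k))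
    (hh' : ∀ k : ℕ, IsHeightAt (k : ℤ) (η' k) (h' k))
    (hnorm : ∀ (k : ℕ) (g : ℤ × ℤ), ¬ IsEvenFace (k : ℤ) g → h (k + 1) g = h k g)
    (hnorm' : ∀ (k : ℕ) (g : ℤ × ℤ), ¬ IsEvenFace (k : ℤ) g → h' (k + 1) g = h' k g)
    (hinit : ∀ g : ℤ × ℤ, |g.1 - f.1| + |g.2 - f.2| ≤ (N : ℤ) + 1 → h 0 g = h' 0 g) :
    ∀ k : ℕ, k ≤ N → h k f = h' k f := by
  have hball : ∀ (k : ℕ) g, l1Dist f g + k ≤ N + 1 → h k g = h' k g := by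
    intro k
    induction k with
    | zero => exact fun g hg => hinit g (by simpa [l1Dist] using hg)
    | succ k ih =>
      intro g hg
      refine heightAt_shuffle_eq (hh k) (hh' k) (hev k ▸ hh (k + 1)) (hev' k ▸ hh' (k + 1))
        (hnorm k) (hnorm' k) fun q hq => ih q ?_
      have := l1Dist_triangle f g q
      push_cast at hg
      linarith
  intro k hk
  exact hball k f (by rw [l1Dist_self]; omega)

/-- locality of the dynamics: run the shuffling dynamics from two initial
dimer coverings with the same choice functions, normalizing the heights so that at each
step the height is unchanged at every face odd at the acting time.  If the two initial
height functions agree at all faces at `ℓ¹`-distance at most `N + 1` from `f`, then the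
heights at `f` agree up to time `N`. -/
theorem stmt_15 (f : ℤ × ℤ) (N : ℕ) (c : ℕ → ℤ × ℤ → Bool)
    (η η' : ℕ → Set DEdge)
    (hη0 : IsDimerCover (η 0)) (hη'0 : IsDimerCover (η' 0))
    (hev : ∀ k : ℕ, η (k + 1) = shuffle (k : ℤ) (c k) (η k))
    (hev' : ∀ k : ℕ, η' (k + 1) = shuffle (k : ℤ) (c k) (η' k))
    (h h' : ℕ → ℤ × ℤ → ℝ)
    (hh : ∀ k : ℕ, IsHeightAt (k : ℤ) (η k) (h k))
    (hh' : ∀ k : ℕ, IsHeightAt (k : ℤ) (η' k) (h' k))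
    (hnorm : ∀ (k : ℕ) (g : ℤ × ℤ), ¬ IsEvenFace (k : ℤ) g → h (k + 1) g = h k g)
    (hnorm' : ∀ (k : ℕ) (g : ℤ × ℤ), ¬ IsEvenFace (k : ℤ) g → h' (k + 1) g = h' k g)
    (hinit : ∀ g : ℤ × ℤ, |g.1 - f.1| + |g.2 - f.2| ≤ (N : ℤ) + 1 → h 0 g = h' 0 g) :
    ∀ k : ℕ, k ≤ N → h k f = h' k f :=
  stmt_15_general f N c η η' hev hev' h h' hh hh' hnorm hnorm' hinit
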